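/- arXiv:1602.04327 — 4 statements merged into one kernel-verified Lean document; each statement's English description precedes it below -/
import Mathlib

section
/- Let l ≥ 1 and b be integers. The l × l matrix P_b^{(l)} with entries (P_b^{(l)})_{r,c} = C(b + 2(r-1), c-1) for 1 ≤ r, c ≤ l (binomial coefficients, rows indexed by b, b+2, ..., b+2l-2, columns by 0, 1, ..., l-1) has determinant 2^{C(l,2)}. -/
/-!
Writing `C(n, c) = (c!)⁻¹ · n(n-1)⋯(n-c+1)` and pulling the factors `(c!)⁻¹` out of the
columns leaves the matrix of the monic polynomials `X(X-1)⋯(X-c+1)` evaluated at the nodes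
`b + 2r`; column operations reduce it to the Vandermonde matrix of these nodes. That determinant
is translation invariant and scales by `2^{C(l,2)}` under `x ↦ 2x`, and the Vandermonde
determinant of the nodes `0, 1, …, l-1` is `∏_{c<l} c!`, which cancels the column factors.
-/

/-- The generalized binomial coefficient `C(n, r) = n(n-1)⋯(n-r+1)/r!` for an
integer `n` and a natural number `r`, with values in `ℚ`. -/
noncomputable def gchoose (n : ℤ) (r : ℕ) : ℚ :=
  (∏ j ∈ Finset.range r, ((n : ℚ) - (j : ℚ))) / (r.factorial : ℚ)

open Matrix Polynomial Finset

lemma gchoose_eq_inv_factorial_mul_eval_descPochhammer (n : ℤ) (r : ℕ) :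
    gchoose n r = (r.factorial : ℚ)⁻¹ * (descPochhammer ℚ r).eval (n : ℚ) := by
  rw [gchoose, descPochhammer_eval_eq_prod_range, div_eq_inv_mul]

lemma det_of_inv_factorial_mul_eval_descPochhammer {K : Type*} [Field K] {n : ℕ}
    (v : Fin n → K) :
    (of fun i j : Fin n => ((j : ℕ).factorial : K)⁻¹ * (descPochhammer K j).eval (v i)).det
      = (∏ j : Fin n, ((j : ℕ).factorial : K))⁻¹ * (vandermonde v).det := by
  rw [det_eval_matrixOfPolynomials_eq_det_vandermonde v (fun j => descPochhammer K j)
      (fun j => descPochhammer_natDegree K j) (fun j => monic_descPochhammer K j),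
    ← prod_inv_distrib, ← det_mul_row]
  rfl

lemma det_vandermonde_const_mul {R : Type*} [CommRing R] {n : ℕ} (d : R) (v : Fin n → R) :
    (vandermonde fun i => d * v i).det = d ^ n.choose 2 * (vandermonde v).det := by
  have hrow : (vandermonde fun i => d * v i)
      = of fun i j : Fin n => d ^ (j : ℕ) * vandermonde v i j := by
    ext i j
    simp only [vandermonde_apply, of_apply, mul_pow]
  rw [hrow, det_mul_row, prod_pow_eq_pow_sum, Fin.sum_univ_eq_sum_range (fun j => j),
    sum_range_id, Nat.choose_two_right]

lemma det_vandermonde_natCast_eq_prod_factorial {R : Type*} [CommRing R] (n : ℕ) :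
    (vandermonde fun i : Fin n => ((i : ℕ) : R)).det = ∏ i : Fin n, ((i : ℕ).factorial : R) := by
  cases n with
  | zero => simp
  | succ n =>
    rw [det_vandermonde_id_eq_superFactorial, ← Nat.prod_range_succ_factorial, Nat.cast_prod,
      Fin.prod_univ_eq_prod_range (fun i => (i.factorial : R))]

theorem det_pascal_like_matrix_general (l : ℕ) (b : ℤ) :
    (Matrix.of fun r c : Fin l => gchoose (b + 2 * (r : ℤ)) (c : ℕ)).det
      = 2 ^ l.choose 2 := by
  have hnodes : (fun r : Fin l => ((b + 2 * (r : ℤ) : ℤ) : ℚ))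
      = fun r : Fin l => 2 * ((r : ℕ) : ℚ) + b := by
    ext r
    push_cast
    ring
  have hfact : (∏ c : Fin l, ((c : ℕ).factorial : ℚ)) ≠ 0 :=
    prod_ne_zero_iff.mpr fun c _ => Nat.cast_ne_zero.mpr (Nat.factorial_ne_zero c)
  simp only [gchoose_eq_inv_factorial_mul_eval_descPochhammer]
  rw [det_of_inv_factorial_mul_eval_descPochhammer, hnodes, det_vandermonde_add,
    det_vandermonde_const_mul, det_vandermonde_natCast_eq_prod_factorial]
  field_simp

/-- For integers `l ≥ 1` and `b`, the `l × l` matrix with `(r,c)`-entry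
`C(b + 2(r-1), c-1)` (rows indexed by `b, b+2, …, b+2l-2`, columns by `0, …, l-1`)
has determinant `2^{C(l,2)}`. -/
theorem det_pascal_like_matrix (l : ℕ) (hl : 1 ≤ l) (b : ℤ) :
    (Matrix.of fun r c : Fin l => gchoose (b + 2 * (r : ℤ)) (c : ℕ)).det
      = 2 ^ l.choose 2 :=
  det_pascal_like_matrix_general l b
end

section
/- Let p be an odd prime and l ≥ 1, b integers. Then the Pascal-like matrix P_b^{(l)} with entries C(b + 2(r-1), c-1) is invertible over ℚ, and every entry of its inverse is a p-adic integer (i.e., has nonnegative p-adic valuation). -/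
open Finset Polynomial Matrix

theorem gchoose_eq_intCast_choose (n : ℤ) (c : ℕ) :
    gchoose n c = ((Ring.choose n c : ℤ) : ℚ) := by
  rw [← eq_intCast (Int.castRingHom ℚ), Ring.map_choose, Ring.choose_eq_smul, gchoose,
    ← aeval_eq_smeval, aeval_def, eval₂_eq_eval_map, descPochhammer_map,
    descPochhammer_eval_eq_prod_range, smul_eq_mul, div_eq_inv_mul]
  rfl

theorem Fin.sum_card_Ioi (n : ℕ) : ∑ i : Fin n, #(Ioi i) = n.choose 2 := by
  simp only [Fin.card_Ioi]
  rw [Fin.sum_univ_eq_sum_range (fun i => n - 1 - i), sum_range_reflect (fun i => i) n,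
    sum_range_id, Nat.choose_two_right]

theorem det_vandermonde_affine {R : Type*} [CommRing R] (n : ℕ) (a b : R) :
    (vandermonde fun i : Fin n => b + a * i).det
      = a ^ n.choose 2 * (vandermonde fun i : Fin n => (i : R)).det := by
  simp only [det_vandermonde, ← Fin.sum_card_Ioi, ← prod_pow_eq_pow_sum, ← prod_const,
    ← prod_mul_distrib]
  refine prod_congr rfl fun i _ => prod_congr rfl fun j _ => ?_
  ring

/-- `pascalLikeMatrix 2 b l` is the paper's `P_b^{(l)}`, with rows and columns indexed from `0`. -/
def pascalLikeMatrix (a b : ℤ) (l : ℕ) : Matrix (Fin l) (Fin l) ℤ :=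
  of fun r c => Ring.choose (b + a * r) c

theorem pascalLikeMatrix_mul_diagonal_factorial (a b : ℤ) (l : ℕ) :
    pascalLikeMatrix a b l * diagonal (fun c : Fin l => ((c : ℕ).factorial : ℤ))
      = of fun r c : Fin l => (descPochhammer ℤ c).eval (b + a * r) := by
  ext r c
  rw [mul_diagonal, of_apply, eval_eq_smeval, Ring.descPochhammer_eq_factorial_smul_choose,
    nsmul_eq_mul, mul_comm]
  rfl

theorem det_pascalLikeMatrix (a b : ℤ) (l : ℕ) :
    (pascalLikeMatrix a b l).det = a ^ l.choose 2 := by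
  cases l with
  | zero => simp
  | succ n =>
    have hdiag : (diagonal fun c : Fin (n + 1) => ((c : ℕ).factorial : ℤ)).det
        = n.superFactorial := by
      rw [det_diagonal, Fin.prod_univ_eq_prod_range (fun c => (c.factorial : ℤ)),
        ← Nat.cast_prod, Nat.prod_range_succ_factorial]
    have hvdm := det_eval_matrixOfPolynomials_eq_det_vandermonde
      (fun r : Fin (n + 1) => b + a * r) (fun c => descPochhammer ℤ c)
      (fun c => descPochhammer_natDegree ℤ c) (fun c => monic_descPochhammer ℤ c)
    rw [det_vandermonde_affine, det_vandermonde_id_eq_superFactorial, ← hdiag,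
      ← pascalLikeMatrix_mul_diagonal_factorial, det_mul] at hvdm
    exact mul_right_cancel₀ (by simp [det_diagonal, prod_ne_zero_iff, Nat.factorial_ne_zero])
      hvdm.symm

theorem norm_inv_map_intCast_le_one {p : ℕ} [Fact p.Prime] {n : Type*} [Fintype n]
    [DecidableEq n] (A : Matrix n n ℤ) (hA : IsCoprime A.det p) (i j : n) :
    ‖(((A.map (Int.cast : ℤ → ℚ))⁻¹ i j : ℚ) : ℚ_[p])‖ ≤ 1 := by
  have hadj : (A.map (Int.cast : ℤ → ℚ)).adjugate i j = A.adjugate i j :=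
    (congrFun₂ ((Int.castRingHom ℚ).map_adjugate A) i j).symm
  rw [Matrix.inv_def, Matrix.smul_apply, ← Int.cast_det, hadj, Ring.inverse_eq_inv',
    smul_eq_mul]
  simp only [Rat.cast_mul, Rat.cast_inv, Rat.cast_intCast]
  rw [norm_mul, norm_inv, Padic.norm_intCast_eq_one_iff.mpr hA, inv_one, one_mul]
  exact Padic.norm_int_le_one _

theorem pascal_like_matrix_inv_padic_integral_general (p : ℕ) [Fact p.Prime] (hp2 : p ≠ 2)
    (l : ℕ) (b : ℤ) :
    IsUnit (Matrix.of fun r c : Fin l => gchoose (b + 2 * (r : ℤ)) (c : ℕ)) ∧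
      ∀ r c : Fin l,
        ‖(((Matrix.of fun r c : Fin l => gchoose (b + 2 * (r : ℤ)) (c : ℕ))⁻¹ r c : ℚ)
          : ℚ_[p])‖ ≤ 1 := by
  have hmap : (pascalLikeMatrix 2 b l).map (Int.cast : ℤ → ℚ)
      = of fun r c : Fin l => gchoose (b + 2 * (r : ℤ)) (c : ℕ) := by
    ext r c
    simp [pascalLikeMatrix, gchoose_eq_intCast_choose]
  have hcop : IsCoprime (pascalLikeMatrix 2 b l).det p := by
    rw [det_pascalLikeMatrix]
    exact (Nat.isCoprime_iff_coprime.mpr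
      ((Nat.coprime_primes Nat.prime_two Fact.out).mpr (Ne.symm hp2))).pow_left
  rw [← hmap]
  refine ⟨?_, norm_inv_map_intCast_le_one _ hcop⟩
  rw [isUnit_iff_isUnit_det, ← Int.cast_det, det_pascalLikeMatrix]
  simp

/-- Let `p` be an odd prime and `l ≥ 1`, `b` integers. The Pascal-like
matrix `P_b^{(l)}` with entries `C(b + 2(r-1), c-1)` is invertible over `ℚ`, and
every entry of its inverse is a `p`-adic integer (has `p`-adic norm at most 1). -/
theorem pascal_like_matrix_inv_padic_integral (p : ℕ) [Fact p.Prime] (hp2 : p ≠ 2)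
    (l : ℕ) (hl : 1 ≤ l) (b : ℤ) :
    IsUnit (Matrix.of fun r c : Fin l => gchoose (b + 2 * (r : ℤ)) (c : ℕ)) ∧
      ∀ r c : Fin l,
        ‖(((Matrix.of fun r c : Fin l => gchoose (b + 2 * (r : ℤ)) (c : ℕ))⁻¹ r c : ℚ)
          : ℚ_[p])‖ ≤ 1 :=
  pascal_like_matrix_inv_padic_integral_general p hp2 l b
end

section
/- For l ≥ 1, define A_k^{(l)} = (2l)!/(2^{2l-1} · l! · (l-1)!) · ((-1)^{k+1}/(2k-1)) · C(l-1, k-1) for k = 1, ..., l. Then the row vector (A_1^{(l)}, ..., A_l^{(l)}) is the first row of the inverse of the Pascal-like matrix P_1^{(l)}; equivalently, ∑_{k=1}^{l} A_k^{(l)} · C(2k-1, c-1) equals 1 if c = 1 and 0 for c = 2, ..., l. -/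
/-- The coefficients `A_k^{(l)} = (2l)!/(2^{2l-1}·l!·(l-1)!) · ((-1)^{k+1}/(2k-1)) · C(l-1,k-1)`. -/
noncomputable def Acoef (l k : ℕ) : ℚ :=
  ((2 * l).factorial : ℚ) / (2 ^ (2 * l - 1) * (l.factorial : ℚ) * ((l - 1).factorial : ℚ))
    * ((-1) ^ (k + 1) / (2 * (k : ℚ) - 1)) * ((l - 1).choose (k - 1) : ℚ)

open Finset in
private lemma altS (n : ℕ) (f : ℕ → ℚ) :
    ∑ m ∈ range (n+2), (-1)^m * ((n+1).choose m : ℚ) * f m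
      = ∑ m ∈ range (n+1), (-1)^m * (n.choose m : ℚ) * f m
        - ∑ m ∈ range (n+1), (-1)^m * (n.choose m : ℚ) * f (m+1) := by
  rw [Finset.sum_range_succ' (fun m => (-1:ℚ)^m * ((n+1).choose m : ℚ) * f m) (n+1),
      Finset.sum_range_succ' (fun m => (-1:ℚ)^m * (n.choose m : ℚ) * f m) n]
  rw [Finset.sum_range_succ (fun m => (-1:ℚ)^m * (n.choose m : ℚ) * f (m+1)) n]
  have h2 : ∀ m ∈ range (n+1), (-1:ℚ)^(m+1) * (((n+1).choose (m+1) : ℕ) : ℚ) * f (m+1)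
      = ((-1:ℚ)^(m+1) * (n.choose m : ℚ) * f (m+1))
        + (-1:ℚ)^(m+1) * (n.choose (m+1) : ℚ) * f (m+1) := by
    intro m _
    rw [Nat.choose_succ_succ]
    push_cast
    ring
  rw [Finset.sum_congr rfl h2, Finset.sum_add_distrib]
  have h4 : ∑ m ∈ range (n+1), (-1:ℚ)^(m+1) * (n.choose (m+1) : ℚ) * f (m+1)
      = ∑ m ∈ range n, (-1:ℚ)^(m+1) * (n.choose (m+1) : ℚ) * f (m+1) := by
    rw [Finset.sum_range_succ]
    simp [Nat.choose_succ_self]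
  rw [h4]
  have h6 : ∑ m ∈ range (n+1), (-1:ℚ)^(m+1) * (n.choose m : ℚ) * f (m+1)
      = -∑ m ∈ range n, (-1:ℚ)^m * (n.choose m : ℚ) * f (m+1)
        - (-1:ℚ)^n * (n.choose n : ℚ) * f (n+1) := by
    rw [Finset.sum_range_succ, ← Finset.sum_neg_distrib]
    rw [Finset.sum_congr rfl (fun m _ => by ring :
      ∀ m ∈ range n, (-1:ℚ)^(m+1) * (n.choose m : ℚ) * f (m+1)
        = -((-1:ℚ)^m * (n.choose m : ℚ) * f (m+1)))]
    ring
  rw [h6]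
  simp only [Nat.choose_zero_right, Nat.choose_self, Nat.cast_one]
  ring

open Finset in
private lemma vanish : ∀ n : ℕ, ∀ i a : ℕ, i < n →
    ∑ m ∈ range (n+1), (-1)^m * (n.choose m : ℚ) * ((2*m + a).choose i : ℚ) = 0 := by
  intro n
  induction n with
  | zero => intro i a hi; omega
  | succ n ih =>
    intro i a hi
    rw [altS n (fun m => ((2*m + a).choose i : ℚ))]
    match i with
    | 0 => simp
    | (i'+1) =>
      have key : ∀ m : ℕ, ((2*(m+1) + a).choose (i'+1) : ℚ)
          = ((2*m + a).choose (i'+1) : ℚ) + (((2*m + (a+1)).choose i' : ℚ)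
            + ((2*m + a).choose i' : ℚ)) := by
        intro m
        have e1 : 2*(m+1) + a = (2*m + (a+1)) + 1 := by ring
        have e2 : 2*m + (a+1) = (2*m + a) + 1 := by ring
        rw [e1, Nat.choose_succ_succ']
        rw [show (2*m+(a+1)) = (2*m+a)+1 from e2, Nat.choose_succ_succ']
        push_cast
        ring
      have hsplit : ∑ m ∈ range (n+1), (-1:ℚ)^m * (n.choose m : ℚ)
            * ((2*(m+1) + a).choose (i'+1) : ℚ)
          = (∑ m ∈ range (n+1), (-1:ℚ)^m * (n.choose m : ℚ) * ((2*m + a).choose (i'+1) : ℚ))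
            + ((∑ m ∈ range (n+1), (-1:ℚ)^m * (n.choose m : ℚ) * ((2*m + (a+1)).choose i' : ℚ))
              + ∑ m ∈ range (n+1), (-1:ℚ)^m * (n.choose m : ℚ) * ((2*m + a).choose i' : ℚ)) := by
        rw [← Finset.sum_add_distrib, ← Finset.sum_add_distrib]
        apply Finset.sum_congr rfl
        intro m _
        rw [key m]
        ring
      rw [hsplit, ih i' (a+1) (by omega), ih i' a (by omega)]
      ring

open Finset in
private lemma oddProd_ne (n : ℕ) (a : ℚ) (ha : 0 ≤ a) : (∏ t ∈ range (n+1), (2*(a+t)+1)) ≠ 0 := by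
  apply Finset.prod_ne_zero_iff.mpr
  intro t ht
  have : (0:ℚ) ≤ t := by positivity
  positivity

open Finset in
private lemma Tgen : ∀ n : ℕ, ∀ a : ℕ,
    ∑ m ∈ range (n+1), (-1)^m * (n.choose m : ℚ) / (2*((m:ℚ)+a)+1)
      = (n.factorial : ℚ) * 2^n / ∏ t ∈ range (n+1), (2*((a:ℚ)+t)+1) := by
  intro n
  induction n with
  | zero => intro a; simp [add_comm]
  | succ n ih =>
    intro a
    have hstep : ∑ m ∈ range (n+2), (-1)^m * ((n+1).choose m : ℚ) / (2*((m:ℚ)+a)+1)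
        = ∑ m ∈ range (n+2), (-1)^m * ((n+1).choose m : ℚ) * (1 / (2*((m:ℚ)+a)+1)) := by
      apply Finset.sum_congr rfl; intro m _; ring
    rw [hstep, altS n (fun m => 1 / (2*((m:ℚ)+a)+1))]
    have e1 : ∑ m ∈ range (n+1), (-1:ℚ)^m * (n.choose m : ℚ) * (1 / (2*((m:ℚ)+a)+1))
        = (n.factorial : ℚ) * 2^n / ∏ t ∈ range (n+1), (2*((a:ℚ)+t)+1) := by
      rw [← ih a]; apply Finset.sum_congr rfl; intro m _; ring
    have e2 : ∑ m ∈ range (n+1), (-1:ℚ)^m * (n.choose m : ℚ) * (1 / (2*(((m+1:ℕ):ℚ)+a)+1))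
        = (n.factorial : ℚ) * 2^n / ∏ t ∈ range (n+1), (2*(((a:ℚ)+1)+t)+1) := by
      have h := ih (a+1)
      push_cast at h
      rw [← h]; apply Finset.sum_congr rfl; intro m _; push_cast; ring
    rw [e1, e2]
    set F : ℚ := (n.factorial : ℚ) * 2^n with hF
    set Pa : ℚ := ∏ t ∈ range (n+1), (2*((a:ℚ)+t)+1) with hPa
    set Pa' : ℚ := ∏ t ∈ range (n+1), (2*(((a:ℚ)+1)+t)+1) with hPa'
    have P1 : ∏ t ∈ range (n+2), (2*((a:ℚ)+t)+1) = Pa * (2*((a:ℚ)+(n+1))+1) := by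
      rw [hPa, Finset.prod_range_succ]; push_cast; ring
    have P2 : ∏ t ∈ range (n+2), (2*((a:ℚ)+t)+1) = (2*(a:ℚ)+1) * Pa' := by
      rw [Finset.prod_range_succ' (fun t => (2*((a:ℚ)+t)+1))]
      rw [hPa', mul_comm]
      congr 1
      · norm_num
      · apply Finset.prod_congr rfl; intro t _; push_cast; ring
    have hy : (2*((a:ℚ)+(n+1))+1) ≠ 0 := by positivity
    have hx : (2*(a:ℚ)+1) ≠ 0 := by positivity
    have d1 : F / Pa = F * (2*((a:ℚ)+(n+1))+1) / ∏ t ∈ range (n+2), (2*((a:ℚ)+t)+1) := by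
      rw [P1, mul_div_mul_right _ _ hy]
    have d2 : F / Pa' = F * (2*(a:ℚ)+1) / ∏ t ∈ range (n+2), (2*((a:ℚ)+t)+1) := by
      rw [P2, mul_comm (2*(a:ℚ)+1) Pa', ← mul_div_mul_right F Pa' hx]
    rw [d1, d2, div_sub_div_same]
    rw [show (n+1+1) = n+2 from rfl]
    congr 1
    push_cast [Nat.factorial_succ]
    ring

open Finset in
private lemma oddProdFact (n : ℕ) : (∏ t ∈ range (n+1), (2*((0:ℚ)+t)+1)) * (2^n * (n.factorial : ℚ))
    = ((2*n+1).factorial : ℚ) := by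
  induction n with
  | zero => simp
  | succ n ih =>
    rw [Finset.prod_range_succ]
    have hf : (2*(n+1)+1).factorial = (2*n+3) * ((2*n+2) * (2*n+1).factorial) := by
      have e : 2*(n+1)+1 = (2*n+1) + 1 + 1 := by ring
      rw [e, Nat.factorial_succ, Nat.factorial_succ]
    rw [hf]
    push_cast [Nat.factorial_succ] at ih ⊢
    linear_combination ((2*(n:ℚ)+3)*2*((n:ℚ)+1)) * ih

/-- For `l ≥ 1`, the row vector `(A_1^{(l)}, …, A_l^{(l)})` is the first
row of the inverse of the Pascal-like matrix `P_1^{(l)}` with entries `C(2r-1, c-1)`;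
equivalently, `∑_{k=1}^{l} A_k^{(l)} · C(2k-1, j) = δ_{j,0}` for `j = 0, …, l-1`. -/
theorem Acoef_first_row_inverse (l : ℕ) (hl : 1 ≤ l) (j : ℕ) (hj : j < l) :
    ∑ k ∈ Finset.Icc 1 l, Acoef l k * ((2 * k - 1).choose j : ℚ)
      = if j = 0 then 1 else 0 := by
  obtain ⟨n, rfl⟩ : ∃ n, l = n + 1 := ⟨l - 1, by omega⟩
  rw [show Finset.Icc 1 (n+1) = Finset.Ico 1 (n+2) from (Finset.Ico_add_one_right_eq_Icc 1 (n+1)).symm]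
  rw [Finset.sum_Ico_eq_sum_range]
  rw [show (n + 2 - 1) = n + 1 from rfl]
  set Cst : ℚ := ((2 * (n+1)).factorial : ℚ)
      / (2 ^ (2*n+1) * ((n+1).factorial : ℚ) * (n.factorial : ℚ)) with hCst
  have hterm : ∀ i : ℕ, Acoef (n+1) (1+i)
      = Cst * ((-1)^i / (2*(i:ℚ)+1)) * ((n.choose i : ℕ) : ℚ) := by
    intro i
    rw [Acoef, show 2*(n+1)-1 = 2*n+1 by omega, show (n+1)-1 = n from rfl,
        show (1+i)-1 = i by omega]
    push_cast
    ring
  rcases Nat.eq_zero_or_pos j with hj0 | hjpos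
  · subst hj0
    rw [if_pos rfl]
    have heq : ∀ i ∈ Finset.range (n+1), Acoef (n+1) (1+i) * ((2*(1+i)-1).choose 0 : ℚ)
        = Cst * ((-1)^i * (n.choose i : ℚ) / (2*(i:ℚ)+1)) := by
      intro i _
      rw [hterm i, Nat.choose_zero_right]
      push_cast
      ring
    rw [Finset.sum_congr rfl heq, ← Finset.mul_sum]
    have hT := Tgen n 0
    push_cast at hT
    simp only [add_zero, zero_add] at hT
    rw [hT]
    have hpe : ∏ t ∈ Finset.range (n+1), (2*((0:ℚ)+t)+1) = ∏ t ∈ Finset.range (n+1), (2*(t:ℚ)+1) :=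
      Finset.prod_congr rfl (fun t _ => by norm_num)
    have hP : (∏ t ∈ Finset.range (n+1), (2*(t:ℚ)+1)) = ((2*n+1).factorial : ℚ)
        / (2^n * (n.factorial : ℚ)) := by
      rw [eq_div_iff (by positivity), ← hpe]
      exact oddProdFact n
    have hfact : ((2*(n+1)).factorial : ℚ) = (2*(n:ℚ)+2) * ((2*n+1).factorial : ℚ) := by
      rw [show 2*(n+1) = (2*n+1)+1 by ring, Nat.factorial_succ]
      push_cast
      ring
    have hfs : ((n+1).factorial : ℚ) = ((n:ℚ)+1) * (n.factorial : ℚ) := by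
      push_cast [Nat.factorial_succ]; ring
    rw [hP, hCst, hfact, hfs]
    have h1 : (n.factorial : ℚ) ≠ 0 := Nat.cast_ne_zero.mpr (Nat.factorial_ne_zero n)
    have h2 : ((2*n+1).factorial : ℚ) ≠ 0 := Nat.cast_ne_zero.mpr (Nat.factorial_ne_zero _)
    field_simp
    ring
  · rw [if_neg (by omega)]
    obtain ⟨j', rfl⟩ : ∃ j', j = j' + 1 := ⟨j - 1, by omega⟩
    have hv : ∑ m ∈ Finset.range (n+1), (-1:ℚ)^m * (n.choose m : ℚ) * ((2*m).choose j' : ℚ) = 0 := by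
      have := vanish n j' 0 (by omega)
      simpa using this
    have heq : ∀ i ∈ Finset.range (n+1), Acoef (n+1) (1+i) * ((2*(1+i)-1).choose (j'+1) : ℚ)
        = (Cst / ((j':ℚ)+1)) * ((-1:ℚ)^i * (n.choose i : ℚ) * ((2*i).choose j' : ℚ)) := by
      intro i _
      rw [hterm i, show 2*(1+i)-1 = 2*i+1 by omega]
      have h1 : (2*(i:ℚ)+1) ≠ 0 := by positivity
      have h2 : ((j':ℚ)+1) ≠ 0 := by positivity
      have hkey : (2*(i:ℚ)+1) * ((2*i).choose j' : ℚ)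
          = ((2*i+1).choose (j'+1) : ℚ) * ((j':ℚ)+1) := by
        have h := Nat.add_one_mul_choose_eq (2*i) j'
        exact_mod_cast h
      have hAB : ((2*i+1).choose (j'+1) : ℚ) / (2*(i:ℚ)+1)
          = ((2*i).choose j' : ℚ) / ((j':ℚ)+1) := by
        rw [div_eq_div_iff h1 h2]
        linear_combination -hkey
      calc Cst * ((-1)^i / (2*(i:ℚ)+1)) * ((n.choose i : ℕ) : ℚ) * ((2*i+1).choose (j'+1) : ℚ)
          = Cst * ((-1)^i * (n.choose i : ℚ))
              * (((2*i+1).choose (j'+1) : ℚ) / (2*(i:ℚ)+1)) := by ring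
        _ = Cst * ((-1)^i * (n.choose i : ℚ))
              * (((2*i).choose j' : ℚ) / ((j':ℚ)+1)) := by rw [hAB]
        _ = (Cst / ((j':ℚ)+1)) * ((-1:ℚ)^i * (n.choose i : ℚ) * ((2*i).choose j' : ℚ)) := by
              ring
    rw [Finset.sum_congr rfl heq, ← Finset.mul_sum, hv, mul_zero]
end

section
/- Let p be an odd prime, R a commutative ring in which p is not a zero divisor (e.g., ℤ_q), l ≥ 1 and b ≥ 1 an odd integer. Suppose u ∈ R satisfies u ≡ ε (mod pR) with ε ∈ {1, −1}, and write u = ε(1 + sp). Let A_{b,k} (k = 1, ..., l) be the entries of the first row of the inverse of the Pascal matrix P_b^{(l)} with entries C(b + 2(r−1), c−1). Then ∑_{k=1}^{l} A_{b,k} · ε(1 + sp)^{b+2k−2} ≡ ε (mod p^l R). -/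
lemma pow_truncation_mem {R : Type*} [CommRing R] (p : ℕ) (l : ℕ) (s : R) (n : ℕ) :
    (1 + s * (p : R)) ^ n - ∑ j ∈ Finset.range l, (n.choose j : R) * (s * (p : R)) ^ j
      ∈ Ideal.span {(p : R) ^ l} := by
  set x := s * (p : R) with hx
  have hpow : (1 + x) ^ n = ∑ j ∈ Finset.range (n + 1), (n.choose j : R) * x ^ j := by
    rw [add_comm, add_pow]
    simp [mul_comm]
  set m := max l (n + 1) with hm
  have h1 : ∑ j ∈ Finset.range m, (n.choose j : R) * x ^ j
      = ∑ j ∈ Finset.range (n + 1), (n.choose j : R) * x ^ j := by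
    symm
    apply Finset.sum_subset (Finset.range_subset_range.2 (le_max_right _ _))
    intro j _ hj
    simp only [Finset.mem_range, not_lt] at hj
    rw [Nat.choose_eq_zero_of_lt hj]
    simp
  have h2 : ∑ j ∈ Finset.range m, (n.choose j : R) * x ^ j
      = (∑ j ∈ Finset.range l, (n.choose j : R) * x ^ j)
        + ∑ j ∈ Finset.Ico l m, (n.choose j : R) * x ^ j := by
    rw [Finset.range_eq_Ico, ← Finset.sum_Ico_consecutive _ (Nat.zero_le l) (le_max_left _ _),
      ← Finset.range_eq_Ico]
  rw [hpow, ← h1, h2]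
  have h3 : (∑ j ∈ Finset.range l, (n.choose j : R) * x ^ j)
        + (∑ j ∈ Finset.Ico l m, (n.choose j : R) * x ^ j)
        - ∑ j ∈ Finset.range l, (n.choose j : R) * x ^ j
      = ∑ j ∈ Finset.Ico l m, (n.choose j : R) * x ^ j := by ring
  rw [h3]
  apply Ideal.sum_mem
  intro j hj
  simp only [Finset.mem_Ico] at hj
  have h4 : x ^ j = ((p : R) ^ l) * (s ^ l * x ^ (j - l)) := by
    have h5 : x ^ j = x ^ l * x ^ (j - l) := by rw [← pow_add, Nat.add_sub_cancel' hj.1]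
    rw [h5, hx, mul_pow]
    ring
  rw [h4]
  exact Ideal.mul_mem_left _ _ (Ideal.mul_mem_right _ _ (Ideal.subset_span rfl))

/-- Let `p` be an odd prime, `R` a commutative ring in which `p` is
not a zero divisor, `l ≥ 1`, and `b ≥ 1` odd. Let `A 1, …, A l ∈ R` be (the images
in `R` of) the first row of the inverse of the Pascal matrix `P_b^{(l)}`,
characterized by the defining property
`∑_{k=1}^{l} A k · C(b + 2k - 2, j) = δ_{j,0}` for `j = 0, …, l-1`.
Let `ε ∈ {1, -1}` and `s ∈ R`. Then
`∑_{k=1}^{l} A k · ε (1 + sp)^{b+2k-2} ≡ ε (mod p^l R)`. -/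
theorem eulerian_sum_congr {R : Type*} [CommRing R] (p : ℕ) (hp : p.Prime) (hpodd : Odd p)
    (hpnzd : ∀ r : R, (p : R) * r = 0 → r = 0)
    (l b : ℕ) (hl : 1 ≤ l) (hb : 1 ≤ b) (hbodd : Odd b)
    (A : ℕ → R)
    (hA : ∀ j < l, ∑ k ∈ Finset.Icc 1 l, A k * ((b + 2 * k - 2).choose j : R)
            = if j = 0 then 1 else 0)
    (s ε : R) (hε : ε = 1 ∨ ε = -1) :
    ∑ k ∈ Finset.Icc 1 l, A k * (ε * (1 + s * (p : R)) ^ (b + 2 * k - 2)) - ε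
      ∈ Ideal.span {(p : R) ^ l} := by
  set x := s * (p : R) with hx
  set T : ℕ → R := fun k => ∑ j ∈ Finset.range l, (((b + 2 * k - 2).choose j : R)) * x ^ j
    with hT
  have key : ∑ k ∈ Finset.Icc 1 l, A k * (ε * T k) = ε := by
    have h1 : ∑ k ∈ Finset.Icc 1 l, A k * T k
        = ∑ j ∈ Finset.range l, (∑ k ∈ Finset.Icc 1 l,
            A k * ((b + 2 * k - 2).choose j : R)) * x ^ j := by
      simp only [hT, Finset.mul_sum, Finset.sum_mul]
      rw [Finset.sum_comm]
      apply Finset.sum_congr rfl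
      intro j _
      apply Finset.sum_congr rfl
      intro k _
      ring
    have h2 : ∑ k ∈ Finset.Icc 1 l, A k * (ε * T k)
        = ε * ∑ k ∈ Finset.Icc 1 l, A k * T k := by
      rw [Finset.mul_sum]
      apply Finset.sum_congr rfl
      intro k _
      ring
    rw [h2, h1]
    have h3 : ∑ j ∈ Finset.range l, (∑ k ∈ Finset.Icc 1 l,
            A k * ((b + 2 * k - 2).choose j : R)) * x ^ j
        = ∑ j ∈ Finset.range l, (if j = 0 then (1:R) else 0) * x ^ j := by
      apply Finset.sum_congr rfl
      intro j hj
      rw [hA j (Finset.mem_range.1 hj)]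
    rw [h3]
    have h4 : ∑ j ∈ Finset.range l, (if j = 0 then (1:R) else 0) * x ^ j = 1 := by
      rw [Finset.sum_eq_single 0]
      · simp
      · intro j _ hj; simp [hj]
      · intro h; exact absurd (Finset.mem_range.2 (by omega)) h
    rw [h4, mul_one]
  have hdiff : ∑ k ∈ Finset.Icc 1 l, (A k * ε) * ((1 + x) ^ (b + 2 * k - 2) - T k)
      = ∑ k ∈ Finset.Icc 1 l, A k * (ε * (1 + x) ^ (b + 2 * k - 2))
        - ∑ k ∈ Finset.Icc 1 l, A k * (ε * T k) := by
    rw [← Finset.sum_sub_distrib]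
    apply Finset.sum_congr rfl
    intro k _
    ring
  have main : ∑ k ∈ Finset.Icc 1 l, A k * (ε * (1 + x) ^ (b + 2 * k - 2)) - ε
      = ∑ k ∈ Finset.Icc 1 l, (A k * ε) * ((1 + x) ^ (b + 2 * k - 2) - T k) := by
    rw [hdiff, key]
  rw [main]
  apply Ideal.sum_mem
  intro k _
  exact Ideal.mul_mem_left _ _ (pow_truncation_mem p l s _)
end
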